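/- Let b ∈ k with b ∉ {2, −2}. Then Iso(b,0) holds (i.e. H_b is isomorphic to H_0 : y² = x(x⁴−1)(x⁴+1)) if and only if b ∈ {0, 6, −6}. -/
import Mathlib


open Polynomial

set_option maxHeartbeats 4000000

/-- The polynomial `f_a = X (X⁴ − 1)(X⁴ + a X² + 1)` over a field `k`. -/
noncomputable def f {k : Type*} [Field k] (a : k) : k[X] :=
  X * (X ^ 4 - 1) * (X ^ 4 + C a * X ^ 2 + 1)

/-- `Iso b a` : the hyperelliptic curve `H_b : y² = f_b(x)` is isomorphic to `H_a : y² = f_a(x)`,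
expressed by the existence of a fractional-linear substitution carrying `f_a` to `λ² f_b`. -/
def Iso {k : Type*} [Field k] (b a : k) : Prop :=
  ∃ α β γ δ lam : k, α * δ - β * γ ≠ 0 ∧ lam ≠ 0 ∧
    C (lam ^ 2) * f b =
      ∑ j ∈ Finset.range 10,
        C ((f a).coeff j) * (C α * X + C β) ^ j * (C γ * X + C δ) ^ (10 - j)

lemma f_eq {k : Type*} [Field k] (a : k) :
    f a = X ^ 9 + C a * X ^ 7 - C a * X ^ 3 - X := by
  unfold f; ring

lemma f_zero {k : Type*} [Field k] : f (0 : k) = X ^ 9 - X := by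
  rw [f_eq]; simp

lemma iso_zero_iff {k : Type*} [Field k] (b : k) :
    Iso b 0 ↔ ∃ al be ga de lam : k, al * de - be * ga ≠ 0 ∧ lam ≠ 0 ∧
      C (lam ^ 2) * f b =
        (C al * X + C be) ^ 9 * (C ga * X + C de) -
          (C al * X + C be) * (C ga * X + C de) ^ 9 := by
  have hs : ∀ al be ga de : k,
      (∑ j ∈ Finset.range 10,
        C ((f (0:k)).coeff j) * (C al * X + C be) ^ j * (C ga * X + C de) ^ (10 - j)) =
      (C al * X + C be) ^ 9 * (C ga * X + C de) -
        (C al * X + C be) * (C ga * X + C de) ^ 9 := by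
    intro al be ga de
    rw [f_zero]
    simp only [Finset.sum_range_succ, Finset.sum_range_zero, coeff_sub, coeff_X_pow, coeff_X]
    norm_num
    ring
  unfold Iso
  constructor
  · rintro ⟨al, be, ga, de, lam, h1, h2, h3⟩
    exact ⟨al, be, ga, de, lam, h1, h2, h3.trans (hs al be ga de)⟩
  · rintro ⟨al, be, ga, de, lam, h1, h2, h3⟩
    exact ⟨al, be, ga, de, lam, h1, h2, h3.trans (hs al be ga de).symm⟩

theorem stmt_11 (p : ℕ) (hp : p.Prime) (hp7 : 7 ≤ p)
    (k : Type*) [Field k] [IsAlgClosed k] [CharP k p]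
    (b : k) (hb : b ∉ ({2, -2} : Set k)) :
    Iso b (0 : k) ↔ b ∈ ({0, 6, -6} : Set k) := by
  have hnz : ∀ n : ℕ, 0 < n → n < p → (n : k) ≠ 0 := by
    intro n hn hnp h
    rw [CharP.cast_eq_zero_iff k p] at h
    exact absurd (Nat.le_of_dvd hn h) (not_le.mpr hnp)
  have h2 : (2 : k) ≠ 0 := by
    have := hnz 2 (by norm_num) (by omega); simpa using this
  have h3 : (3 : k) ≠ 0 := by
    have := hnz 3 (by norm_num) (by omega); simpa using this
  have h16 : (16 : k) ≠ 0 := by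
    have : (16 : k) = 2 ^ 4 := by norm_num
    rw [this]; exact pow_ne_zero _ h2
  have h9 : (9 : k) ≠ 0 := by
    have : (9 : k) = 3 ^ 2 := by norm_num
    rw [this]; exact pow_ne_zero _ h3
  rw [iso_zero_iff]
  constructor
  · rintro ⟨al, be, ga, de, lam, hdet, hlam, hpoly⟩
    -- Expand both sides into explicit coefficient form
    have hL : C (lam ^ 2) * f b =
        C (lam ^ 2) * X ^ 9 + C (lam ^ 2 * b) * X ^ 7 - C (lam ^ 2 * b) * X ^ 3 -
          C (lam ^ 2) * X ^ 1 := by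
      rw [f_eq]; simp only [map_mul]; ring
    have hR : (C al * X + C be) ^ 9 * (C ga * X + C de) -
          (C al * X + C be) * (C ga * X + C de) ^ 9 =
        C (al ^ 9 * ga - ga ^ 9 * al) * X ^ 10 +
        C (9 * al ^ 8 * be * ga - 9 * ga ^ 8 * de * al + al ^ 9 * de - ga ^ 9 * be) * X ^ 9 +
        C (36 * al ^ 7 * be ^ 2 * ga - 36 * ga ^ 7 * de ^ 2 * al + 9 * al ^ 8 * be * de -
            9 * ga ^ 8 * de * be) * X ^ 8 +
        C (84 * al ^ 6 * be ^ 3 * ga - 84 * ga ^ 6 * de ^ 3 * al + 36 * al ^ 7 * be ^ 2 * de -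
            36 * ga ^ 7 * de ^ 2 * be) * X ^ 7 +
        C (126 * al ^ 5 * be ^ 4 * ga - 126 * ga ^ 5 * de ^ 4 * al + 84 * al ^ 6 * be ^ 3 * de -
            84 * ga ^ 6 * de ^ 3 * be) * X ^ 6 +
        C (126 * al ^ 4 * be ^ 5 * ga - 126 * ga ^ 4 * de ^ 5 * al + 126 * al ^ 5 * be ^ 4 * de -
            126 * ga ^ 5 * de ^ 4 * be) * X ^ 5 +
        C (84 * al ^ 3 * be ^ 6 * ga - 84 * ga ^ 3 * de ^ 6 * al + 126 * al ^ 4 * be ^ 5 * de -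
            126 * ga ^ 4 * de ^ 5 * be) * X ^ 4 +
        C (36 * al ^ 2 * be ^ 7 * ga - 36 * ga ^ 2 * de ^ 7 * al + 84 * al ^ 3 * be ^ 6 * de -
            84 * ga ^ 3 * de ^ 6 * be) * X ^ 3 +
        C (9 * al * be ^ 8 * ga - 9 * ga * de ^ 8 * al + 36 * al ^ 2 * be ^ 7 * de -
            36 * ga ^ 2 * de ^ 7 * be) * X ^ 2 +
        C (be ^ 9 * ga - de ^ 9 * al + 9 * al * be ^ 8 * de - 9 * ga * de ^ 8 * be) * X ^ 1 +
        C (be ^ 9 * de - de ^ 9 * be) := by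
      simp only [map_add, map_sub, map_mul, map_pow, map_ofNat]
      ring
    have key := (hL.symm.trans hpoly).trans hR
    have coeffEq : ∀ n : ℕ,
        (C (lam ^ 2) * X ^ 9 + C (lam ^ 2 * b) * X ^ 7 - C (lam ^ 2 * b) * X ^ 3 -
          C (lam ^ 2) * X ^ 1).coeff n =
        (C (al ^ 9 * ga - ga ^ 9 * al) * X ^ 10 +
        C (9 * al ^ 8 * be * ga - 9 * ga ^ 8 * de * al + al ^ 9 * de - ga ^ 9 * be) * X ^ 9 +
        C (36 * al ^ 7 * be ^ 2 * ga - 36 * ga ^ 7 * de ^ 2 * al + 9 * al ^ 8 * be * de -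
            9 * ga ^ 8 * de * be) * X ^ 8 +
        C (84 * al ^ 6 * be ^ 3 * ga - 84 * ga ^ 6 * de ^ 3 * al + 36 * al ^ 7 * be ^ 2 * de -
            36 * ga ^ 7 * de ^ 2 * be) * X ^ 7 +
        C (126 * al ^ 5 * be ^ 4 * ga - 126 * ga ^ 5 * de ^ 4 * al + 84 * al ^ 6 * be ^ 3 * de -
            84 * ga ^ 6 * de ^ 3 * be) * X ^ 6 +
        C (126 * al ^ 4 * be ^ 5 * ga - 126 * ga ^ 4 * de ^ 5 * al + 126 * al ^ 5 * be ^ 4 * de -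
            126 * ga ^ 5 * de ^ 4 * be) * X ^ 5 +
        C (84 * al ^ 3 * be ^ 6 * ga - 84 * ga ^ 3 * de ^ 6 * al + 126 * al ^ 4 * be ^ 5 * de -
            126 * ga ^ 4 * de ^ 5 * be) * X ^ 4 +
        C (36 * al ^ 2 * be ^ 7 * ga - 36 * ga ^ 2 * de ^ 7 * al + 84 * al ^ 3 * be ^ 6 * de -
            84 * ga ^ 3 * de ^ 6 * be) * X ^ 3 +
        C (9 * al * be ^ 8 * ga - 9 * ga * de ^ 8 * al + 36 * al ^ 2 * be ^ 7 * de -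
            36 * ga ^ 2 * de ^ 7 * be) * X ^ 2 +
        C (be ^ 9 * ga - de ^ 9 * al + 9 * al * be ^ 8 * de - 9 * ga * de ^ 8 * be) * X ^ 1 +
        C (be ^ 9 * de - de ^ 9 * be)).coeff n := by
      intro n; rw [key]
    have E10 : (0 : k) = al ^ 9 * ga - ga ^ 9 * al := by
      have h := coeffEq 10
      simp only [coeff_add, coeff_sub, coeff_C_mul, coeff_X_pow, coeff_C] at h
      norm_num at h
      linear_combination h
    have E9 : lam ^ 2 =
        9 * al ^ 8 * be * ga - 9 * ga ^ 8 * de * al + al ^ 9 * de - ga ^ 9 * be := by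
      have h := coeffEq 9
      simp only [coeff_add, coeff_sub, coeff_C_mul, coeff_X_pow, coeff_C] at h
      norm_num at h
      linear_combination h
    have E8 : (0 : k) = 36 * al ^ 7 * be ^ 2 * ga - 36 * ga ^ 7 * de ^ 2 * al +
        9 * al ^ 8 * be * de - 9 * ga ^ 8 * de * be := by
      have h := coeffEq 8
      simp only [coeff_add, coeff_sub, coeff_C_mul, coeff_X_pow, coeff_C] at h
      norm_num at h
      linear_combination h
    have E7 : lam ^ 2 * b = 84 * al ^ 6 * be ^ 3 * ga - 84 * ga ^ 6 * de ^ 3 * al +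
        36 * al ^ 7 * be ^ 2 * de - 36 * ga ^ 7 * de ^ 2 * be := by
      have h := coeffEq 7
      simp only [coeff_add, coeff_sub, coeff_C_mul, coeff_X_pow, coeff_C] at h
      norm_num at h
      linear_combination h
    have E3 : -(lam ^ 2 * b) = 36 * al ^ 2 * be ^ 7 * ga - 36 * ga ^ 2 * de ^ 7 * al +
        84 * al ^ 3 * be ^ 6 * de - 84 * ga ^ 3 * de ^ 6 * be := by
      have h := coeffEq 3
      simp only [coeff_add, coeff_sub, coeff_C_mul, coeff_X_pow, coeff_C] at h
      norm_num at h
      linear_combination h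
    have E1 : -(lam ^ 2) =
        be ^ 9 * ga - de ^ 9 * al + 9 * al * be ^ 8 * de - 9 * ga * de ^ 8 * be := by
      have h := coeffEq 1
      simp only [coeff_add, coeff_sub, coeff_C_mul, coeff_X_pow, coeff_C] at h
      norm_num at h
      linear_combination h
    -- now scalar case analysis
    by_cases hga : ga = 0
    · -- then al ≠ 0, de ≠ 0, be = 0, b = 0
      subst hga
      have hal : al ≠ 0 := by
        intro h; apply hdet; rw [h]; ring
      have hde : de ≠ 0 := by
        intro h; apply hdet; rw [h]; ring
      have hbe : be = 0 := by
        have h0 : (9 * al ^ 8 * de) * be = 0 := by linear_combination -E8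
        rcases mul_eq_zero.mp h0 with h | h
        · exact absurd h (mul_ne_zero (mul_ne_zero h9 (pow_ne_zero _ hal)) hde)
        · exact h
      subst hbe
      have hb0 : lam ^ 2 * b = 0 := by linear_combination E7
      rcases mul_eq_zero.mp hb0 with h | h
      · exact absurd ((pow_eq_zero_iff (two_ne_zero)).mp h) hlam
      · simp [h]
    by_cases hal : al = 0
    · subst hal
      have hbe : be ≠ 0 := by
        intro h; apply hdet; rw [h]; ring
      have hga' : ga ≠ 0 := hga
      have hde : de = 0 := by
        have h0 : (9 * ga ^ 8 * be) * de = 0 := by linear_combination E8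
        rcases mul_eq_zero.mp h0 with h | h
        · exact absurd h (mul_ne_zero (mul_ne_zero h9 (pow_ne_zero _ hga')) hbe)
        · exact h
      subst hde
      have hb0 : lam ^ 2 * b = 0 := by linear_combination E7
      rcases mul_eq_zero.mp hb0 with h | h
      · exact absurd ((pow_eq_zero_iff (two_ne_zero)).mp h) hlam
      · simp [h]
    -- main case: al ≠ 0, ga ≠ 0
    have h8 : al ^ 8 = ga ^ 8 := by
      have h0 : (al * ga) * (al ^ 8 - ga ^ 8) = 0 := by linear_combination -E10
      rcases mul_eq_zero.mp h0 with h | h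
      · exact absurd h (mul_ne_zero hal hga)
      · exact sub_eq_zero.mp h
    have hA : al ^ 6 * be ^ 2 * ga = ga ^ 7 * de ^ 2 := by
      have h36 : (36 : k) ≠ 0 := by
        have e : (36 : k) = 2 ^ 2 * 3 ^ 2 := by norm_num
        rw [e]; exact mul_ne_zero (pow_ne_zero _ h2) (pow_ne_zero _ h3)
      have h1 : (36 : k) * (al * (al ^ 6 * be ^ 2 * ga - ga ^ 7 * de ^ 2)) = 0 := by
        linear_combination -E8 - 9 * be * de * h8
      rcases mul_eq_zero.mp h1 with h | h
      · exact absurd h h36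
      · rcases mul_eq_zero.mp h with h' | h'
        · exact absurd h' hal
        · exact sub_eq_zero.mp h'
    have hsq : be ^ 2 * ga ^ 2 = al ^ 2 * de ^ 2 := by
      have h1 : al ^ 6 * (be ^ 2 * ga ^ 2) = al ^ 6 * (al ^ 2 * de ^ 2) := by
        linear_combination ga * hA - de ^ 2 * h8
      exact mul_left_cancel₀ (pow_ne_zero _ hal) h1
    have hbd : al * de + be * ga = 0 := by
      have h1 : (al * de - be * ga) * (al * de + be * ga) = 0 := by
        linear_combination -hsq
      rcases mul_eq_zero.mp h1 with h | h
      · exact absurd h hdet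
      · exact h
    have hlam9 : lam ^ 2 = 16 * al ^ 8 * be * ga := by
      linear_combination E9 + (al ^ 8 - 9 * ga ^ 8) * hbd - 8 * be * ga * h8
    have hbe : be ≠ 0 := by
      intro h
      apply hlam
      have hz : lam ^ 2 = 0 := by rw [hlam9, h]; ring
      exact (pow_eq_zero_iff (two_ne_zero)).mp hz
    have hd8 : ga ^ 8 * de ^ 8 = ga ^ 8 * be ^ 8 := by
      linear_combination ((al * de) ^ 7 - (al * de) ^ 6 * (be * ga) + (al * de) ^ 5 * (be * ga) ^ 2
        - (al * de) ^ 4 * (be * ga) ^ 3 + (al * de) ^ 3 * (be * ga) ^ 4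
        - (al * de) ^ 2 * (be * ga) ^ 5 + (al * de) * (be * ga) ^ 6 - (be * ga) ^ 7) * hbd
        - de ^ 8 * h8
    have hd8' : de ^ 8 = be ^ 8 := mul_left_cancel₀ (pow_ne_zero _ hga) hd8
    have hlam1 : lam ^ 2 = 16 * be ^ 9 * ga := by
      linear_combination -E1 + (de ^ 8 - 9 * be ^ 8) * hbd + 8 * be * ga * hd8'
    have hab8 : al ^ 8 = be ^ 8 := by
      have h1 : (16 * be * ga) * al ^ 8 = (16 * be * ga) * be ^ 8 := by
        linear_combination hlam1 - hlam9
      exact mul_left_cancel₀ (mul_ne_zero (mul_ne_zero h16 hbe) hga) h1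
    have c16 : (16 * al ^ 8 * be * ga : k) ≠ 0 :=
      mul_ne_zero (mul_ne_zero (mul_ne_zero h16 (pow_ne_zero _ hal)) hbe) hga
    have h7 : al ^ 2 * b = 6 * be ^ 2 := by
      have h7' : al ^ 2 * (lam ^ 2 * b) = 96 * al ^ 8 * be ^ 3 * ga := by
        linear_combination al ^ 2 * E7 + (36 * al ^ 8 * be ^ 2 - 84 * al ^ 2 * ga ^ 6 * de ^ 2) * hbd
          - 48 * be * ga ^ 7 * hsq - 48 * be ^ 3 * ga * h8
      have h1 : (16 * al ^ 8 * be * ga) * (al ^ 2 * b) = (16 * al ^ 8 * be * ga) * (6 * be ^ 2) := by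
        linear_combination h7' - al ^ 2 * b * hlam9
      exact mul_left_cancel₀ c16 h1
    have h3' : al ^ 6 * b = 6 * be ^ 6 := by
      have h3'' : al ^ 6 * (lam ^ 2 * b) = 96 * al ^ 8 * be ^ 7 * ga := by
        linear_combination -al ^ 6 * E3
          + (-84 * al ^ 8 * be ^ 6 + 36 * al ^ 6 * ga ^ 2 * de ^ 6) * hbd
          - 48 * be * ga ^ 3 * (al ^ 4 * de ^ 4 + al ^ 2 * de ^ 2 * be ^ 2 * ga ^ 2
              + be ^ 4 * ga ^ 4) * hsq
          - 48 * be ^ 7 * ga * h8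
      have h1 : (16 * al ^ 8 * be * ga) * (al ^ 6 * b) = (16 * al ^ 8 * be * ga) * (6 * be ^ 6) := by
        linear_combination h3'' - al ^ 6 * b * hlam9
      exact mul_left_cancel₀ c16 h1
    have hb2 : b ^ 2 = 36 := by
      have h1 : al ^ 8 * b ^ 2 = al ^ 8 * 36 := by
        linear_combination (al ^ 6 * b) * h7 + 6 * be ^ 2 * h3' - 36 * hab8
      exact mul_left_cancel₀ (pow_ne_zero _ hal) h1
    have h1 : (b - 6) * (b + 6) = 0 := by linear_combination hb2
    rcases mul_eq_zero.mp h1 with h | h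
    · have hbv : b = 6 := sub_eq_zero.mp h
      simp [hbv]
    · have hbv : b = -6 := eq_neg_of_add_eq_zero_left h
      simp [hbv]
  · intro hmem
    simp only [Set.mem_insert_iff, Set.mem_singleton_iff] at hmem
    rcases hmem with rfl | rfl | rfl
    · refine ⟨1, 0, 0, 1, 1, by norm_num, one_ne_zero, ?_⟩
      rw [f_zero]
      simp only [one_pow, map_one, map_zero]
      ring
    · refine ⟨1, 1, 1, -1, 4, ?_, ?_, ?_⟩
      · intro h; apply h2; linear_combination -h
      · have e : (4 : k) = 2 ^ 2 := by norm_num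
        rw [e]; exact pow_ne_zero _ h2
      · rw [f_eq]
        simp only [map_pow, map_ofNat, map_one, map_neg]
        ring
    · obtain ⟨i, hi⟩ := IsAlgClosed.exists_pow_nat_eq (-1 : k) (n := 2) (by norm_num)
      have hi0 : i ≠ 0 := by
        intro h0; rw [h0] at hi
        have h1 : (1 : k) = 0 := by linear_combination hi
        exact one_ne_zero h1
      obtain ⟨lam, hlam⟩ := IsAlgClosed.exists_pow_nat_eq (16 * i : k) (n := 2) (by norm_num)
      have hlam0 : lam ≠ 0 := by
        intro h; rw [h] at hlam
        have : (16 : k) * i = 0 := by rw [← hlam]; ring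
        rcases mul_eq_zero.mp this with h' | h'
        · exact h16 h'
        · exact hi0 h'
      refine ⟨i, 1, i, -1, lam, ?_, hlam0, ?_⟩
      · intro h
        have : (2 : k) * i = 0 := by linear_combination -h
        rcases mul_eq_zero.mp this with h' | h'
        · exact h2 h'
        · exact hi0 h'
      · have hCi : (C i) ^ 2 = (-1 : k[X]) := by
          rw [← map_pow, hi, map_neg, map_one]
        rw [f_eq, hlam]
        simp only [map_mul, map_pow, map_ofNat, map_one, map_neg]
        linear_combination (96 * C i * X ^ 3
          + (-96 * C i + 96 * (C i) ^ 3 - 96 * (C i) ^ 5) * X ^ 7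
          + (16 * C i - 16 * (C i) ^ 3 + 16 * (C i) ^ 5 - 16 * (C i) ^ 7) * X ^ 9) * hCi
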